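/- Let D ⊆ ℝ^d be a finite set, p* = (x₁,…,x_d) ∈ ℝ^d a query point, and k ≥ 1. Let P ⊆ D be contained in an axis-aligned box R = (bp, tp) (bpᵢ ≤ tpᵢ for all i), and let dist_min(p*, R) := √(Σᵢ (xᵢ − x'ᵢ)²), where x' is the clamped point with x'ᵢ = bpᵢ if xᵢ < bpᵢ, x'ᵢ = tpᵢ if xᵢ > tpᵢ, and x'ᵢ = xᵢ otherwise. Suppose there exist k distinct points q₁,…,q_k ∈ D \ P with dist(p*, qⱼ) < dist_min(p*, R) for every j. Then any k-element set Q ⊆ D satisfying the kNN property — for all q ∈ Q and q' ∈ D \ Q, dist(p*, q) ≤ dist(p*, q') — is disjoint from P. -/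
import Mathlib


/-- kNN rectangle pruning: if k distinct points of D outside P are all
strictly closer to the query point p* than dist_min(p*, R), where P is
contained in the axis-aligned box R, then any exact kNN result Q is disjoint
from P. -/
theorem knn_rectangle_pruning
    (d k : ℕ) (hk : 1 ≤ k)
    (D P : Finset (EuclideanSpace ℝ (Fin d))) (hPD : P ⊆ D)
    (bp tp : Fin d → ℝ) (h : ∀ i, bp i ≤ tp i)
    (hPR : ∀ p ∈ P, ∀ i, bp i ≤ p i ∧ p i ≤ tp i)
    (pstar : EuclideanSpace ℝ (Fin d))
    (x' : EuclideanSpace ℝ (Fin d))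
    (hx' : ∀ i, x' i =
      if pstar i < bp i then bp i else if tp i < pstar i then tp i else pstar i)
    (K : Finset (EuclideanSpace ℝ (Fin d)))
    (hKD : ∀ q ∈ K, q ∈ D ∧ q ∉ P) (hKcard : K.card = k)
    (hKnear : ∀ q ∈ K, dist pstar q < Real.sqrt (∑ i, (pstar i - x' i) ^ 2)) :
    ∀ Q : Finset (EuclideanSpace ℝ (Fin d)), Q ⊆ D → Q.card = k →
      (∀ q ∈ Q, ∀ q' ∈ D, q' ∉ Q → dist pstar q ≤ dist pstar q') →
      Disjoint Q P := by
  intro Q hQD hQcard hQnn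
  -- main geometric fact: points of P are at distance ≥ dist_min
  have hfar : ∀ p ∈ P, Real.sqrt (∑ i, (pstar i - x' i) ^ 2) ≤ dist pstar p := by
    intro p hp
    rw [EuclideanSpace.dist_eq]
    apply Real.sqrt_le_sqrt
    apply Finset.sum_le_sum
    intro i _
    have hb := (hPR p hp i).1
    have ht := (hPR p hp i).2
    have : |pstar i - x' i| ≤ |pstar i - p i| := by
      rw [hx' i]
      rcases lt_or_ge (pstar i) (bp i) with h1 | h1
      · rw [if_pos h1, abs_of_nonpos (by linarith), abs_of_nonpos (by linarith)]
        linarith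
      · rw [if_neg (not_lt.mpr h1)]
        rcases lt_or_ge (tp i) (pstar i) with h2 | h2
        · rw [if_pos h2, abs_of_nonneg (by linarith), abs_of_nonneg (by linarith)]
          linarith
        · rw [if_neg (not_lt.mpr h2)]
          simp [abs_nonneg]
    calc (pstar i - x' i) ^ 2 ≤ (pstar i - p i) ^ 2 := by
          rw [← sq_abs (pstar i - x' i), ← sq_abs (pstar i - p i)]
          exact pow_le_pow_left₀ (abs_nonneg _) this 2
      _ = dist (pstar i) (p i) ^ 2 := by rw [Real.dist_eq, sq_abs]
  rw [Finset.disjoint_left]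
  intro q hqQ hqP
  -- q ∈ Q ∩ P, but q ∉ K
  have hqK : q ∉ K := fun hqK => (hKD q hqK).2 hqP
  -- K \ Q is nonempty
  have : ¬ K ⊆ Q := by
    intro hsub
    have := Finset.eq_of_subset_of_card_le hsub (by omega)
    rw [← this] at hqQ
    exact hqK hqQ
  obtain ⟨q0, hq0K, hq0Q⟩ := Finset.not_subset.mp this
  have h1 : dist pstar q ≤ dist pstar q0 := hqQ |> fun hq => hQnn q hq q0 (hKD q0 hq0K).1 hq0Q
  have h2 := hKnear q0 hq0K
  have h3 := hfar q hqP
  linarith
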